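/- arXiv:2109.14986 — 3 statements merged into one kernel-verified Lean document; each statement's English description precedes it below -/
import Mathlib

section
/- Let P be a solution of the synaptic CME. Then for every integer 1 ≤ n0 ≤ N0 and every t ≥ 0, the time derivative of the upper tail of the marginal P_N satisfies the exact flux identity d/dt [ ∑_{n=n0}^{N0} P_N(n,t) ] = − κe · ∑_{o=0}^{C} (n0 − o) · P(n0, o, t); in particular, probability mass flows only from level n+1 to level n, never in the opposite direction. -/
open Finset

/-- Right-hand side of the synaptic chemical master equation (CME) for state `(n,o)`
at time `t`.  Terms referring to out-of-range indices are set to zero. -/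
noncomputable def cmeRHS (N0 C : ℕ) (κd κe : ℝ) (κa : ℝ → ℝ)
    (P : ℕ → ℕ → ℝ → ℝ) (n o : ℕ) (t : ℝ) : ℝ :=
  -(κd * (o : ℝ) + κe * ((n : ℝ) - (o : ℝ)) + κa t * ((n : ℝ) - (o : ℝ)) * ((C : ℝ) - (o : ℝ)))
      * P n o t
  + (if o + 1 ≤ C then κd * ((o : ℝ) + 1) * P n (o + 1) t else 0)
  + (if n + 1 ≤ N0 then κe * ((n : ℝ) + 1 - (o : ℝ)) * P (n + 1) o t else 0)
  + (if 1 ≤ o then κa t * ((n : ℝ) - (o : ℝ) + 1) * ((C : ℝ) - (o : ℝ) + 1) * P n (o - 1) t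
     else 0)

/-- `P` solves the synaptic CME on `[0,∞)`. -/
def IsCMESolution (N0 C : ℕ) (κd κe : ℝ) (κa : ℝ → ℝ) (P : ℕ → ℕ → ℝ → ℝ) : Prop :=
  ∀ n, n ≤ N0 → ∀ o, o ≤ C → ∀ t : ℝ, 0 ≤ t →
    HasDerivAt (fun s => P n o s) (cmeRHS N0 C κd κe κa P n o t) t

/-- Marginal distribution of the total number of neurotransmitters:
`P_N(n,t) = ∑_{o=0}^{C} P(n,o,t)`. -/
noncomputable def margN (C : ℕ) (P : ℕ → ℕ → ℝ → ℝ) (n : ℕ) (t : ℝ) : ℝ :=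
  ∑ o ∈ Finset.range (C + 1), P n o t

/-- Marginal distribution of the number of occupied receptors:
`P_O(o,t) = ∑_{n=0}^{N0} P(n,o,t)`. -/
noncomputable def margO (N0 : ℕ) (P : ℕ → ℕ → ℝ → ℝ) (o : ℕ) (t : ℝ) : ℝ :=
  ∑ n ∈ Finset.range (N0 + 1), P n o t

/-- Binomial probability mass function `P_B(k; m, p)`. -/
noncomputable def binPMF (m : ℕ) (p : ℝ) (k : ℕ) : ℝ :=
  (m.choose k : ℝ) * p ^ k * (1 - p) ^ (m - k)

/-- Right-hand side of the CME truncated to the state set `S`: the entry for a state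
`(n,o) ∈ S` keeps the full diagonal term but only receives inflow from states in `S`. -/
noncomputable def truncRHS (N0 C : ℕ) (κd κe : ℝ) (κa : ℝ → ℝ)
    (S : Finset (ℕ × ℕ)) (Q : ℕ → ℕ → ℝ → ℝ) (n o : ℕ) (t : ℝ) : ℝ :=
  -(κd * (o : ℝ) + κe * ((n : ℝ) - (o : ℝ)) + κa t * ((n : ℝ) - (o : ℝ)) * ((C : ℝ) - (o : ℝ)))
      * Q n o t
  + (if o + 1 ≤ C ∧ (n, o + 1) ∈ S then κd * ((o : ℝ) + 1) * Q n (o + 1) t else 0)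
  + (if n + 1 ≤ N0 ∧ (n + 1, o) ∈ S then κe * ((n : ℝ) + 1 - (o : ℝ)) * Q (n + 1) o t else 0)
  + (if 1 ≤ o ∧ (n, o - 1) ∈ S then
      κa t * ((n : ℝ) - (o : ℝ) + 1) * ((C : ℝ) - (o : ℝ) + 1) * Q n (o - 1) t
     else 0)

/-- `Q` is the truncated solution on the state set `S` for `t ≥ tk`, with initial
condition `Q(tk) = P(tk)|_S`. -/
def IsTruncatedSolution (N0 C : ℕ) (κd κe : ℝ) (κa : ℝ → ℝ)
    (S : Finset (ℕ × ℕ)) (tk : ℝ) (P Q : ℕ → ℕ → ℝ → ℝ) : Prop :=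
  (∀ p ∈ S, Q p.1 p.2 tk = P p.1 p.2 tk) ∧
  (∀ p ∈ S, ∀ t : ℝ, tk ≤ t →
    HasDerivAt (fun s => Q p.1 p.2 s) (truncRHS N0 C κd κe κa S Q p.1 p.2 t) t)

/-!
Every reaction term of the CME is the flux into a state minus the flux out of it. Within a
row `n`, the dissociation and association fluxes telescope in `o` and vanish at the boundary
(nothing dissociates at `o = 0`, nothing associates at `o = C`), so the row sum of the
right-hand side consists of escape fluxes only. Summed over the rows `n0 ≤ n ≤ N0`, these
telescope in turn, leaving the escape flux out of row `n0`.
-/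

noncomputable def dissociationFlux (κd : ℝ) (P : ℕ → ℕ → ℝ → ℝ) (n o : ℕ) (t : ℝ) : ℝ :=
  κd * o * P n o t

noncomputable def associationFlux (C : ℕ) (κa : ℝ → ℝ) (P : ℕ → ℕ → ℝ → ℝ) (n o : ℕ) (t : ℝ) :
    ℝ :=
  κa t * ((n : ℝ) - o) * ((C : ℝ) - o) * P n o t

noncomputable def escapeFlux (κe : ℝ) (P : ℕ → ℕ → ℝ → ℝ) (n o : ℕ) (t : ℝ) : ℝ :=
  κe * ((n : ℝ) - o) * P n o t

theorem sum_Icc_ite_succ_sub {M : Type*} [AddCommGroup M] {a b : ℕ} (hab : a ≤ b)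
    (f : ℕ → M) :
    ∑ i ∈ Icc a b, ((if i + 1 ≤ b then f (i + 1) else 0) - f i) = -f a := by
  rw [← Ico_add_one_right_eq_Icc, sum_Ico_succ_top hab, if_neg (by omega),
    sum_congr rfl fun i hi => by rw [if_pos (show i + 1 ≤ b from (mem_Ico.mp hi).2)],
    sum_Ico_sub f hab]
  abel

theorem sum_range_ite_pred_sub {M : Type*} [AddCommGroup M] (C : ℕ) (f : ℕ → M) :
    ∑ i ∈ range (C + 1), ((if 1 ≤ i then f (i - 1) else 0) - f i) = -f C := by
  rw [sum_range_succ', if_neg (Nat.not_succ_le_zero 0)]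
  simp only [Nat.le_add_left, if_true, Nat.add_sub_cancel, sum_range_sub']
  abel

theorem cmeRHS_eq_flux_differences (N0 C : ℕ) (κd κe : ℝ) (κa : ℝ → ℝ)
    (P : ℕ → ℕ → ℝ → ℝ) (n o : ℕ) (t : ℝ) :
    cmeRHS N0 C κd κe κa P n o t =
      ((if o + 1 ≤ C then dissociationFlux κd P n (o + 1) t else 0)
          - dissociationFlux κd P n o t)
        + ((if 1 ≤ o then associationFlux C κa P n (o - 1) t else 0)
          - associationFlux C κa P n o t)
        + ((if n + 1 ≤ N0 then escapeFlux κe P (n + 1) o t else 0) - escapeFlux κe P n o t) := by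
  unfold cmeRHS dissociationFlux associationFlux escapeFlux
  by_cases ho : 1 ≤ o
  · split_ifs <;> push_cast [Nat.cast_sub ho] <;> ring
  · split_ifs <;> push_cast <;> ring

theorem sum_cmeRHS_eq_sum_escape (N0 C : ℕ) (κd κe : ℝ) (κa : ℝ → ℝ)
    (P : ℕ → ℕ → ℝ → ℝ) (n : ℕ) (t : ℝ) :
    ∑ o ∈ range (C + 1), cmeRHS N0 C κd κe κa P n o t =
      ∑ o ∈ range (C + 1),
        ((if n + 1 ≤ N0 then escapeFlux κe P (n + 1) o t else 0) - escapeFlux κe P n o t) := by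
  have hdiss := sum_Icc_ite_succ_sub (Nat.zero_le C) (dissociationFlux κd P n · t)
  have hassoc := sum_range_ite_pred_sub C (associationFlux C κa P n · t)
  rw [← Nat.range_succ_eq_Icc_zero] at hdiss
  simp only [cmeRHS_eq_flux_differences, sum_add_distrib, hdiss, hassoc]
  simp [dissociationFlux, associationFlux]

theorem sum_Icc_sum_cmeRHS {n0 N0 : ℕ} (hn0 : n0 ≤ N0) (C : ℕ) (κd κe : ℝ) (κa : ℝ → ℝ)
    (P : ℕ → ℕ → ℝ → ℝ) (t : ℝ) :
    ∑ n ∈ Icc n0 N0, ∑ o ∈ range (C + 1), cmeRHS N0 C κd κe κa P n o t =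
      -(κe * ∑ o ∈ range (C + 1), ((n0 : ℝ) - o) * P n0 o t) := by
  simp only [sum_cmeRHS_eq_sum_escape]
  rw [sum_comm, sum_congr rfl fun o _ => sum_Icc_ite_succ_sub hn0 (escapeFlux κe P · o t),
    sum_neg_distrib, mul_sum]
  simp only [escapeFlux, mul_assoc]

theorem IsCMESolution.hasDerivAt_margN {N0 C : ℕ} {κd κe : ℝ} {κa : ℝ → ℝ}
    {P : ℕ → ℕ → ℝ → ℝ} (hP : IsCMESolution N0 C κd κe κa P) {n : ℕ} (hn : n ≤ N0) {t : ℝ}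
    (ht : 0 ≤ t) :
    HasDerivAt (margN C P n) (∑ o ∈ range (C + 1), cmeRHS N0 C κd κe κa P n o t) t :=
  HasDerivAt.fun_sum fun o ho => hP n hn o (Nat.lt_succ_iff.mp (mem_range.mp ho)) t ht

theorem cme_margN_upper_tail_flux_general
    (N0 C : ℕ) (κd κe : ℝ) (κa : ℝ → ℝ)
    (P : ℕ → ℕ → ℝ → ℝ) (hP : IsCMESolution N0 C κd κe κa P) :
    ∀ n0 : ℕ, 1 ≤ n0 → n0 ≤ N0 → ∀ t : ℝ, 0 ≤ t →
      HasDerivAt (fun s => ∑ n ∈ Finset.Icc n0 N0, margN C P n s)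
        (-(κe * ∑ o ∈ Finset.range (C + 1), ((n0 : ℝ) - (o : ℝ)) * P n0 o t)) t := by
  intro n0 _ hn0 t ht
  rw [← sum_Icc_sum_cmeRHS hn0 C κd κe κa P t]
  exact HasDerivAt.fun_sum fun n hn => hP.hasDerivAt_margN (mem_Icc.mp hn).2 ht

/-- Exact flux identity for the upper tail of the marginal `P_N`: for
`1 ≤ n0 ≤ N0`, the time derivative of `∑_{n=n0}^{N0} P_N(n,t)` equals
`−κe · ∑_{o=0}^{C} (n0 − o) · P(n0,o,t)`; probability mass flows only downwards in `n`. -/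
theorem cme_margN_upper_tail_flux
    (N0 C : ℕ) (κd κe : ℝ) (κa : ℝ → ℝ)
    (hN0 : 1 ≤ N0) (hC : 1 ≤ C) (hκd : 0 ≤ κd) (hκe : 0 ≤ κe)
    (hκa_cont : Continuous κa) (hκa : ∀ t : ℝ, 0 ≤ κa t)
    (P : ℕ → ℕ → ℝ → ℝ) (hP : IsCMESolution N0 C κd κe κa P) :
    ∀ n0 : ℕ, 1 ≤ n0 → n0 ≤ N0 → ∀ t : ℝ, 0 ≤ t →
      HasDerivAt (fun s => ∑ n ∈ Finset.Icc n0 N0, margN C P n s)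
        (-(κe * ∑ o ∈ Finset.range (C + 1), ((n0 : ℝ) - (o : ℝ)) * P n0 o t)) t :=
  cme_margN_upper_tail_flux_general N0 C κd κe κa P hP
end

section
/- Let P be the solution of the synaptic CME with initial condition P(N0,0,0)=1 and P(n,o,0)=0 for all other states, let t_k ≥ 0, ε > 0, and let N_max be any integer with ∑_{n'=N_max}^{N0} P_N(n', t_k) < ε. Then the same tail bound persists for all later times: ∑_{n'=N_max}^{N0} P_N(n', t) < ε for all t ≥ t_k. -/
/-!
Write the CME as a linear system `P' = A(t) P` with a time-dependent rate matrix. The unphysical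
states (`n < o`) receive no inflow from the physical ones, so a Grönwall estimate for the
energy `∑ P²` over them shows that they stay empty. On the physical states the off-diagonal
rates are nonnegative, and the same estimate for `∑ min(P, 0)²` shows that `P` stays
nonnegative. Summing the CME over `n ≥ N_max`, the binding and unbinding terms telescope away
in `o` and the escape terms telescope in `n`, leaving
`d/dt ∑_{n ≥ N_max} P_N(n) = -∑_o κe (N_max - o) P(N_max, o) ≤ 0`.
-/

open Finset

open Filter Topology

theorem nonpos_of_hasDerivAt_le_mul {f f' : ℝ → ℝ} {K a b : ℝ}
    (hf : ∀ t ∈ Set.Icc a b, HasDerivAt f (f' t) t) (ha : f a ≤ 0)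
    (bound : ∀ t ∈ Set.Icc a b, f' t ≤ K * f t) {t : ℝ} (ht : t ∈ Set.Icc a b) : f t ≤ 0 := by
  have h := le_gronwallBound_of_liminf_deriv_right_le (δ := 0) (ε := 0)
    (fun t ht => (hf t ht).continuousAt.continuousWithinAt)
    (fun t ht _ hr =>
      (hf t (Set.Ico_subset_Icc_self ht)).hasDerivWithinAt.liminf_right_slope_le hr)
    ha (fun t ht => by simpa using bound t (Set.Ico_subset_Icc_self ht)) t ht
  rwa [gronwallBound_ε0_δ0] at h

theorem hasDerivAt_min_zero_sq (u : ℝ) :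
    HasDerivAt (fun v : ℝ => min v 0 ^ 2) (2 * min u 0) u := by
  rcases lt_trichotomy u 0 with hu | rfl | hu
  · have hloc : (fun v : ℝ => min v 0 ^ 2) =ᶠ[𝓝 u] fun v => v ^ 2 := by
      filter_upwards [eventually_lt_nhds hu] with v hv
      rw [min_eq_left hv.le]
    rw [min_eq_left hu.le]
    simpa using (hasDerivAt_pow 2 u).congr_of_eventuallyEq hloc
  · have hsq : (fun v : ℝ => min v 0 ^ 2) =O[𝓝 0] fun v => ‖v - 0‖ ^ 2 :=
      Asymptotics.IsBigO.of_bound 1 <| Eventually.of_forall fun v => by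
        rcases le_total v 0 with hv | hv <;> simp [hv]
    simpa using (hsq.hasFDerivAt one_lt_two).hasDerivAt
  · have hloc : (fun v : ℝ => min v 0 ^ 2) =ᶠ[𝓝 u] fun _ => 0 := by
      filter_upwards [eventually_gt_nhds hu] with v hv
      simp [hv.le]
    rw [min_eq_right hu.le, mul_zero]
    exact (hasDerivAt_const u 0).congr_of_eventuallyEq hloc

theorem sum_Icc_ite_add_one_sub {M : Type*} [AddCommGroup M] {a b : ℕ} (hab : a ≤ b)
    (g : ℕ → M) : ∑ i ∈ Icc a b, ((if i + 1 ≤ b then g (i + 1) else 0) - g i) = -g a := by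
  set g' : ℕ → M := fun m => if m ≤ b then g m else 0
  calc ∑ i ∈ Icc a b, ((if i + 1 ≤ b then g (i + 1) else 0) - g i)
      = ∑ i ∈ Icc a b, (g' (i + 1) - g' i) :=
        sum_congr rfl fun i hi => by simp [g', (mem_Icc.1 hi).2]
    _ = -g a := by rw [sum_Icc_sub hab]; simp [g', hab]

theorem sum_range_ite_sub_one_sub {M : Type*} [AddCommGroup M] (N : ℕ) (g : ℕ → M) :
    ∑ i ∈ range (N + 1), ((if 1 ≤ i then g (i - 1) else 0) - g i) = -g N := by
  rw [sum_sub_distrib, sum_range_succ', sum_range_succ]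
  simp

section LinearODE

variable {ι : Type*} {s : Finset ι} {A : ℝ → ι → ι → ℝ}

theorem exists_abs_le_of_continuous (hA : ∀ i j, Continuous fun t => A t i j) (a b : ℝ) :
    ∃ M, ∀ t ∈ Set.Icc a b, ∀ i ∈ s, ∀ j ∈ s, |A t i j| ≤ M := by
  obtain ⟨M, hM⟩ := (isCompact_Icc (a := a) (b := b)).exists_bound_of_continuousOn
    (f := fun t => ∑ i ∈ s, ∑ j ∈ s, |A t i j|) (by fun_prop)
  refine ⟨M, fun t ht i hi j hj => ?_⟩
  calc |A t i j| ≤ ∑ j ∈ s, |A t i j| :=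
        single_le_sum (f := fun j => |A t i j|) (fun _ _ => abs_nonneg _) hj
    _ ≤ ∑ i ∈ s, ∑ j ∈ s, |A t i j| :=
        single_le_sum (f := fun i => ∑ j ∈ s, |A t i j|)
          (fun _ _ => sum_nonneg fun _ _ => abs_nonneg _) hi
    _ ≤ M := le_of_abs_le (hM t ht)

theorem two_mul_mul_le_of_abs_le {a M : ℝ} (ha : |a| ≤ M) (y z : ℝ) :
    2 * y * (a * z) ≤ M * (y ^ 2 + z ^ 2) := by
  obtain ⟨ha₁, ha₂⟩ := abs_le.mp ha
  nlinarith [mul_nonneg (sub_nonneg.2 ha₂) (sq_nonneg (y - z)),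
    mul_nonneg (neg_le_iff_add_nonneg.1 ha₁) (sq_nonneg (y + z))]

theorem sum_two_mul_sum_le_of_abs_le {B : ι → ι → ℝ} {M : ℝ}
    (hB : ∀ i ∈ s, ∀ j ∈ s, |B i j| ≤ M) (y : ι → ℝ) :
    ∑ i ∈ s, 2 * y i * ∑ j ∈ s, B i j * y j ≤ 2 * (#s * M) * ∑ i ∈ s, y i ^ 2 := by
  calc ∑ i ∈ s, 2 * y i * ∑ j ∈ s, B i j * y j
      = ∑ i ∈ s, ∑ j ∈ s, 2 * y i * (B i j * y j) := by simp only [mul_sum]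
    _ ≤ ∑ i ∈ s, ∑ j ∈ s, M * (y i ^ 2 + y j ^ 2) :=
        sum_le_sum fun i hi => sum_le_sum fun j hj =>
          two_mul_mul_le_of_abs_le (hB i hi j hj) _ _
    _ = 2 * (#s * M) * ∑ i ∈ s, y i ^ 2 := by
        rw [mul_sum]
        simp only [mul_add, sum_add_distrib, sum_const, nsmul_eq_mul, ← mul_sum]
        ring

theorem eq_zero_of_hasDerivAt_sum_sq_le (hA : ∀ i j, Continuous fun t => A t i j)
    {y : ι → ℝ → ℝ} {E' : ℝ → ℝ} {t : ℝ} (ht : 0 ≤ t)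
    (hE : ∀ τ ∈ Set.Icc 0 t, HasDerivAt (fun τ => ∑ i ∈ s, y i τ ^ 2) (E' τ) τ)
    (hE' : ∀ τ ∈ Set.Icc 0 t, E' τ ≤ ∑ i ∈ s, 2 * y i τ * ∑ j ∈ s, A τ i j * y j τ)
    (h0 : ∀ i ∈ s, y i 0 = 0) {i : ι} (hi : i ∈ s) : y i t = 0 := by
  obtain ⟨M, hM⟩ := exists_abs_le_of_continuous (s := s) hA 0 t
  have hEt : ∑ i ∈ s, y i t ^ 2 ≤ 0 :=
    nonpos_of_hasDerivAt_le_mul hE (sum_eq_zero fun i hi => by rw [h0 i hi]; ring).le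
      (fun τ hτ => (hE' τ hτ).trans (sum_two_mul_sum_le_of_abs_le (hM τ hτ) _)) ⟨ht, le_rfl⟩
  have hyi := (sum_eq_zero_iff_of_nonneg fun i _ => sq_nonneg (y i t)).1
    (hEt.antisymm (sum_nonneg fun i _ => sq_nonneg _)) i hi
  exact pow_eq_zero_iff two_ne_zero |>.1 hyi

variable {x : ι → ℝ → ℝ}

theorem eq_zero_of_hasDerivAt_linear (hA : ∀ i j, Continuous fun t => A t i j)
    (hx : ∀ t, 0 ≤ t → ∀ i ∈ s, HasDerivAt (x i) (∑ j ∈ s, A t i j * x j t) t)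
    (h0 : ∀ i ∈ s, x i 0 = 0) {t : ℝ} (ht : 0 ≤ t) {i : ι} (hi : i ∈ s) : x i t = 0 :=
  eq_zero_of_hasDerivAt_sum_sq_le hA ht
    (fun τ hτ => HasDerivAt.fun_sum fun i hi => (hx τ hτ.1 i hi).pow 2)
    (fun τ _ => by simp) h0 hi

theorem nonneg_of_hasDerivAt_linear (hA : ∀ i j, Continuous fun t => A t i j)
    (hmetzler : ∀ t, 0 ≤ t → ∀ i ∈ s, ∀ j ∈ s, j ≠ i → 0 ≤ A t i j)
    (hx : ∀ t, 0 ≤ t → ∀ i ∈ s, HasDerivAt (x i) (∑ j ∈ s, A t i j * x j t) t)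
    (h0 : ∀ i ∈ s, 0 ≤ x i 0) {t : ℝ} (ht : 0 ≤ t) {i : ι} (hi : i ∈ s) : 0 ≤ x i t := by
  have hneg := eq_zero_of_hasDerivAt_sum_sq_le (y := fun i t => min (x i t) 0) hA ht
    (fun τ hτ => HasDerivAt.fun_sum fun i hi =>
      (hasDerivAt_min_zero_sq (x i τ)).comp τ (hx τ hτ.1 i hi))
    (fun τ hτ => sum_le_sum fun i hi => ?_) (fun i hi => min_eq_right (h0 i hi)) hi
  · exact min_eq_right_iff.1 hneg
  -- Off the diagonal `A ≥ 0` and `min (x i) 0 ≤ 0`, so lowering `x j` to `min (x j) 0` raises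
  -- the term; on the diagonal `min x 0 * x = min x 0 * min x 0`.
  rw [mul_sum, mul_sum]
  refine sum_le_sum fun j hj => ?_
  rcases eq_or_ne j i with rfl | hji
  · rcases le_total (x j τ) 0 with hxj | hxj <;> simp [hxj]
  · exact mul_le_mul_of_nonpos_left
      (mul_le_mul_of_nonneg_left (min_le_left _ _) (hmetzler τ hτ.1 i hi j hj hji))
      (by linarith [min_le_right (x i τ) 0])

end LinearODE

-- `cmeRate C κd κe κa t p q` is the coefficient of `P q` in the equation for `P p`.
noncomputable def cmeRate (C : ℕ) (κd κe : ℝ) (κa : ℝ → ℝ) (t : ℝ) (p q : ℕ × ℕ) : ℝ :=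
  (if q = p then
      -(κd * p.2 + κe * ((p.1 : ℝ) - p.2) + κa t * ((p.1 : ℝ) - p.2) * ((C : ℝ) - p.2))
    else 0)
  + (if q = (p.1, p.2 + 1) then κd * ((p.2 : ℝ) + 1) else 0)
  + (if q = (p.1 + 1, p.2) then κe * ((p.1 : ℝ) + 1 - p.2) else 0)
  + (if q = (p.1, p.2 - 1) ∧ 1 ≤ p.2 then
      κa t * ((p.1 : ℝ) - p.2 + 1) * ((C : ℝ) - p.2 + 1) else 0)

def cmeStates (N0 C : ℕ) : Finset (ℕ × ℕ) := range (N0 + 1) ×ˢ range (C + 1)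

theorem mem_cmeStates {N0 C : ℕ} {p : ℕ × ℕ} : p ∈ cmeStates N0 C ↔ p.1 ≤ N0 ∧ p.2 ≤ C := by
  simp [cmeStates]

variable {N0 C : ℕ} {κd κe : ℝ} {κa : ℝ → ℝ} {P : ℕ → ℕ → ℝ → ℝ}

theorem continuous_cmeRate (hκa : Continuous κa) (p q : ℕ × ℕ) :
    Continuous fun t => cmeRate C κd κe κa t p q := by
  unfold cmeRate
  split_ifs <;> fun_prop

theorem cmeRHS_eq_sum_cmeRate {n o : ℕ} (hn : n ≤ N0) (ho : o ≤ C) (t : ℝ) :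
    cmeRHS N0 C κd κe κa P n o t =
      ∑ q ∈ cmeStates N0 C, cmeRate C κd κe κa t (n, o) q * P q.1 q.2 t := by
  simp only [cmeRate, add_mul, ite_mul, zero_mul, ite_and, sum_add_distrib, sum_ite_eq',
    mem_cmeStates, hn, ho, (Nat.sub_le o 1).trans ho, if_true]
  rfl

-- A physical state feeds an unphysical one only when `o = n + 1`, where the rate vanishes.
theorem cmeRate_eq_zero_of_lt_of_le {p q : ℕ × ℕ} (hp : p.1 < p.2) (hq : q.2 ≤ q.1) (t : ℝ) :
    cmeRate C κd κe κa t p q = 0 := by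
  obtain ⟨n, o⟩ := p
  obtain ⟨m, k⟩ := q
  simp only at hp hq
  simp only [cmeRate, Prod.mk.injEq]
  by_cases ho : o = n + 1
  · subst ho
    split_ifs <;> first | omega | (push_cast; ring)
  · split_ifs <;> first | omega | simp

theorem cmeRate_nonneg (hκd : 0 ≤ κd) (hκe : 0 ≤ κe) (hκa : ∀ t, 0 ≤ κa t) {p q : ℕ × ℕ}
    (hp : p.2 ≤ p.1) (hpC : p.2 ≤ C) (hqp : q ≠ p) (t : ℝ) : 0 ≤ cmeRate C κd κe κa t p q := by
  obtain ⟨n, o⟩ := p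
  have hon : (o : ℝ) ≤ n := by exact_mod_cast hp
  have hoC : (o : ℝ) ≤ C := by exact_mod_cast hpC
  have h₁ : 0 ≤ κd * ((o : ℝ) + 1) := by positivity
  have h₂ : 0 ≤ κe * ((n : ℝ) + 1 - o) := mul_nonneg hκe (by linarith)
  have h₃ : 0 ≤ κa t * ((n : ℝ) - o + 1) * ((C : ℝ) - o + 1) :=
    mul_nonneg (mul_nonneg (hκa t) (by linarith)) (by linarith)
  simp only [cmeRate, if_neg hqp]
  split_ifs <;> linarith

theorem IsCMESolution.hasDerivAt_sum_cmeRate (hP : IsCMESolution N0 C κd κe κa P) {p : ℕ × ℕ}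
    (hp : p ∈ cmeStates N0 C) {t : ℝ} (ht : 0 ≤ t) :
    HasDerivAt (fun s => P p.1 p.2 s)
      (∑ q ∈ cmeStates N0 C, cmeRate C κd κe κa t p q * P q.1 q.2 t) t := by
  obtain ⟨hn, ho⟩ := mem_cmeStates.1 hp
  rw [← cmeRHS_eq_sum_cmeRate hn ho]
  exact hP _ hn _ ho t ht

theorem IsCMESolution.eq_zero_of_lt (hP : IsCMESolution N0 C κd κe κa P) (hκa : Continuous κa)
    (h0 : ∀ n o, n < o → P n o 0 = 0) {t : ℝ} (ht : 0 ≤ t) {n o : ℕ} (hn : n ≤ N0)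
    (ho : o ≤ C) (hno : n < o) : P n o t = 0 := by
  refine eq_zero_of_hasDerivAt_linear (s := (cmeStates N0 C).filter fun p => p.1 < p.2)
    (A := cmeRate C κd κe κa) (x := fun p t => P p.1 p.2 t) (continuous_cmeRate hκa)
    (fun τ hτ p hp => ?_) (fun p hp => h0 _ _ (mem_filter.1 hp).2) ht (i := (n, o))
    (by simp [mem_cmeStates, *])
  obtain ⟨hpS, hp⟩ := mem_filter.1 hp
  rw [sum_filter_of_ne fun q _ hq => ?_]
  · exact hP.hasDerivAt_sum_cmeRate hpS hτ
  · by_contra hq'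
    exact hq (by rw [cmeRate_eq_zero_of_lt_of_le hp (not_lt.1 hq'), zero_mul])

theorem IsCMESolution.nonneg (hP : IsCMESolution N0 C κd κe κa P) (hκd : 0 ≤ κd) (hκe : 0 ≤ κe)
    (hκa_cont : Continuous κa) (hκa : ∀ t, 0 ≤ κa t) (h0 : ∀ n o, 0 ≤ P n o 0)
    (hbad0 : ∀ n o, n < o → P n o 0 = 0) {t : ℝ} (ht : 0 ≤ t) {n o : ℕ} (hn : n ≤ N0)
    (ho : o ≤ C) (hon : o ≤ n) : 0 ≤ P n o t := by
  refine nonneg_of_hasDerivAt_linear (s := (cmeStates N0 C).filter fun p => p.2 ≤ p.1)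
    (A := cmeRate C κd κe κa) (x := fun p t => P p.1 p.2 t) (continuous_cmeRate hκa_cont)
    (fun τ _ p hp q _ hqp => ?_) (fun τ hτ p hp => ?_) (fun p _ => h0 _ _) ht (i := (n, o))
    (by simp [mem_cmeStates, *])
  · obtain ⟨hpS, hp⟩ := mem_filter.1 hp
    exact cmeRate_nonneg hκd hκe hκa hp (mem_cmeStates.1 hpS).2 hqp τ
  · obtain ⟨hpS, -⟩ := mem_filter.1 hp
    rw [sum_filter_of_ne fun q hq hq0 => ?_]
    · exact hP.hasDerivAt_sum_cmeRate hpS hτ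
    · by_contra hq'
      obtain ⟨hqn, hqo⟩ := mem_cmeStates.1 hq
      exact hq0 (by rw [hP.eq_zero_of_lt hκa_cont hbad0 hτ hqn hqo (not_le.1 hq'), mul_zero])

-- The flux from level `n` to `n - 1` through escape of the `n - o` free transmitters.
noncomputable def cmeEscapeFlux (C : ℕ) (κe : ℝ) (P : ℕ → ℕ → ℝ → ℝ) (n : ℕ) (t : ℝ) : ℝ :=
  ∑ o ∈ range (C + 1), κe * ((n : ℝ) - o) * P n o t

theorem sum_range_cmeRHS (n : ℕ) (t : ℝ) :
    ∑ o ∈ range (C + 1), cmeRHS N0 C κd κe κa P n o t =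
      (if n + 1 ≤ N0 then cmeEscapeFlux C κe P (n + 1) t else 0) - cmeEscapeFlux C κe P n t := by
  set gd : ℕ → ℝ := fun o => κd * o * P n o t
  set ga : ℕ → ℝ := fun o => κa t * ((n : ℝ) - o) * ((C : ℝ) - o) * P n o t
  have hsplit : ∀ o ∈ range (C + 1), cmeRHS N0 C κd κe κa P n o t =
      ((if o + 1 ≤ C then gd (o + 1) else 0) - gd o)
        + ((if 1 ≤ o then ga (o - 1) else 0) - ga o)
        + ((if n + 1 ≤ N0 then κe * (((n + 1 : ℕ) : ℝ) - o) * P (n + 1) o t else 0)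
          - κe * ((n : ℝ) - o) * P n o t) := by
    intro o _
    simp only [cmeRHS, gd, ga]
    split_ifs <;> push_cast [*] <;> ring
  have hd : ∑ o ∈ range (C + 1), ((if o + 1 ≤ C then gd (o + 1) else 0) - gd o) = 0 := by
    rw [Nat.range_succ_eq_Icc_zero, sum_Icc_ite_add_one_sub C.zero_le]
    simp [gd]
  have ha : ∑ o ∈ range (C + 1), ((if 1 ≤ o then ga (o - 1) else 0) - ga o) = 0 := by
    rw [sum_range_ite_sub_one_sub]
    simp [ga]
  rw [sum_congr rfl hsplit, sum_add_distrib, sum_add_distrib, hd, ha, zero_add, zero_add,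
    sum_sub_distrib]
  split_ifs <;> simp [cmeEscapeFlux]

theorem IsCMESolution.hasDerivAt_sum_Icc_margN (hP : IsCMESolution N0 C κd κe κa P) {Nmax : ℕ}
    (hNmax : Nmax ≤ N0) {t : ℝ} (ht : 0 ≤ t) :
    HasDerivAt (fun s => ∑ n ∈ Icc Nmax N0, margN C P n s) (-cmeEscapeFlux C κe P Nmax t) t := by
  have h := HasDerivAt.fun_sum fun n (hn : n ∈ Icc Nmax N0) =>
    HasDerivAt.fun_sum fun o (ho : o ∈ range (C + 1)) =>
      hP n (mem_Icc.1 hn).2 o (Nat.lt_succ_iff.1 (mem_range.1 ho)) t ht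
  rwa [sum_congr rfl fun n _ => sum_range_cmeRHS n t,
    sum_Icc_ite_add_one_sub hNmax (fun m => cmeEscapeFlux C κe P m t)] at h

theorem cmeEscapeFlux_nonneg (hκe : 0 ≤ κe) {n : ℕ} {t : ℝ}
    (hgood : ∀ o ≤ C, o ≤ n → 0 ≤ P n o t) (hbad : ∀ o ≤ C, n < o → P n o t = 0) :
    0 ≤ cmeEscapeFlux C κe P n t := by
  refine sum_nonneg fun o ho => ?_
  have hoC := Nat.lt_succ_iff.1 (mem_range.1 ho)
  rcases le_or_gt o n with hon | hno
  · exact mul_nonneg (mul_nonneg hκe (sub_nonneg.2 (by exact_mod_cast hon))) (hgood o hoC hon)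
  · rw [hbad o hoC hno, mul_zero]

theorem IsCMESolution.antitoneOn_sum_Icc_margN (hP : IsCMESolution N0 C κd κe κa P)
    (hκd : 0 ≤ κd) (hκe : 0 ≤ κe) (hκa_cont : Continuous κa) (hκa : ∀ t, 0 ≤ κa t)
    (h0 : ∀ n o, 0 ≤ P n o 0) (hbad0 : ∀ n o, n < o → P n o 0 = 0) (Nmax : ℕ) :
    AntitoneOn (fun t => ∑ n ∈ Icc Nmax N0, margN C P n t) (Set.Ici 0) := by
  rcases le_or_gt Nmax N0 with hNmax | hNmax
  · have hderiv := fun t (ht : t ∈ Set.Ici (0 : ℝ)) => hP.hasDerivAt_sum_Icc_margN hNmax ht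
    refine antitoneOn_of_hasDerivWithinAt_nonpos (convex_Ici 0)
      (fun t ht => (hderiv t ht).continuousAt.continuousWithinAt)
      (fun t ht => (hderiv t (interior_subset ht)).hasDerivWithinAt) fun t ht => ?_
    have ht : 0 ≤ t := interior_subset ht
    exact neg_nonpos.2 <| cmeEscapeFlux_nonneg hκe
      (fun o ho hon => hP.nonneg hκd hκe hκa_cont hκa h0 hbad0 ht hNmax ho hon)
      (fun o ho hno => hP.eq_zero_of_lt hκa_cont hbad0 ht hNmax ho hno)
  · simp only [Icc_eq_empty_of_lt hNmax, sum_empty]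
    exact antitoneOn_const

theorem cme_margN_upper_tail_bound_persists_general
    (N0 C : ℕ) (κd κe : ℝ) (κa : ℝ → ℝ)
    (hκd : 0 ≤ κd) (hκe : 0 ≤ κe)
    (hκa_cont : Continuous κa) (hκa : ∀ t : ℝ, 0 ≤ κa t)
    (P : ℕ → ℕ → ℝ → ℝ) (hP : IsCMESolution N0 C κd κe κa P)
    (hinit1 : P N0 0 0 = 1)
    (hinit0 : ∀ n o : ℕ, ¬(n = N0 ∧ o = 0) → P n o 0 = 0)
    (tk : ℝ) (htk : 0 ≤ tk) (ε : ℝ)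
    (Nmax : ℕ)
    (hNmax : ∑ n' ∈ Finset.Icc Nmax N0, margN C P n' tk < ε) :
    ∀ t : ℝ, tk ≤ t → ∑ n' ∈ Finset.Icc Nmax N0, margN C P n' t < ε := by
  have h0 : ∀ n o, 0 ≤ P n o 0 := by
    intro n o
    by_cases h : n = N0 ∧ o = 0
    · rw [h.1, h.2, hinit1]
      exact zero_le_one
    · rw [hinit0 n o h]
  have hbad0 : ∀ n o, n < o → P n o 0 = 0 := fun n o hno => hinit0 n o (by omega)
  intro t ht
  exact (hP.antitoneOn_sum_Icc_margN hκd hκe hκa_cont hκa h0 hbad0 Nmax htk (htk.trans ht)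
    ht).trans_lt hNmax

/-- For the solution of the synaptic CME started from `(N0, 0)`, if the
upper tail of `P_N` is below `ε` at time `t_k`, it remains below `ε` at all later times. -/
theorem cme_margN_upper_tail_bound_persists
    (N0 C : ℕ) (κd κe : ℝ) (κa : ℝ → ℝ)
    (hN0 : 1 ≤ N0) (hC : 1 ≤ C) (hκd : 0 ≤ κd) (hκe : 0 ≤ κe)
    (hκa_cont : Continuous κa) (hκa : ∀ t : ℝ, 0 ≤ κa t)
    (P : ℕ → ℕ → ℝ → ℝ) (hP : IsCMESolution N0 C κd κe κa P)
    (hinit1 : P N0 0 0 = 1)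
    (hinit0 : ∀ n o : ℕ, ¬(n = N0 ∧ o = 0) → P n o 0 = 0)
    (tk : ℝ) (htk : 0 ≤ tk) (ε : ℝ) (hε : 0 < ε)
    (Nmax : ℕ)
    (hNmax : ∑ n' ∈ Finset.Icc Nmax N0, margN C P n' tk < ε) :
    ∀ t : ℝ, tk ≤ t → ∑ n' ∈ Finset.Icc Nmax N0, margN C P n' t < ε :=
  cme_margN_upper_tail_bound_persists_general N0 C κd κe κa hκd hκe hκa_cont hκa P hP hinit1 hinit0
    tk htk ε Nmax hNmax
end

section
/- Let P be the solution of the synaptic CME with initial condition P(N0,0,0)=1 and P(n,o,0)=0 for all other states, and assume N0 ≤ C or restrict to states with o ≤ C. Then the infeasible states carry no probability for all time: P(n,o,t) = 0 for every t ≥ 0 whenever o > n (the number of occupied receptors can never exceed the number of surviving neurotransmitters). -/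
open Finset

set_option maxHeartbeats 1000000 in
/-- For the solution of the synaptic CME started from `(N0, 0)`, the
infeasible states with `o > n` carry no probability at any time. -/
theorem cme_infeasible_states_zero
    (N0 C : ℕ) (κd κe : ℝ) (κa : ℝ → ℝ)
    (hN0 : 1 ≤ N0) (hC : 1 ≤ C) (hκd : 0 ≤ κd) (hκe : 0 ≤ κe)
    (hκa_cont : Continuous κa) (hκa : ∀ t : ℝ, 0 ≤ κa t)
    (P : ℕ → ℕ → ℝ → ℝ) (hP : IsCMESolution N0 C κd κe κa P)
    (hinit1 : P N0 0 0 = 1)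
    (hinit0 : ∀ n o : ℕ, ¬(n = N0 ∧ o = 0) → P n o 0 = 0) :
    ∀ n, n ≤ N0 → ∀ o, o ≤ C → n < o → ∀ t : ℝ, 0 ≤ t → P n o t = 0 := by
  intro n hn o ho hno t ht
  -- Bound κa on [0, t]
  obtain ⟨x0, hx0mem, hx0'⟩ := isCompact_Icc.exists_isMaxOn (α := ℝ)
    ⟨0, Set.left_mem_Icc.2 ht⟩ (hκa_cont.continuousOn : ContinuousOn κa (Set.Icc 0 t))
  have hx0 : ∀ y ∈ Set.Icc (0:ℝ) t, κa y ≤ κa x0 := fun y hy => hx0' hy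
  set Ka := κa x0 with hKadef
  have hKa0 : 0 ≤ Ka := hκa x0
  have hN0R : (0:ℝ) ≤ (N0:ℝ) := Nat.cast_nonneg _
  have hCR : (0:ℝ) ≤ (C:ℝ) := Nat.cast_nonneg _
  set S : ℝ := (N0 : ℝ) + (C : ℝ) + 2 with hSdef
  have hS1 : (1:ℝ) ≤ S := by simp only [hSdef]; linarith
  have hS0 : (0:ℝ) ≤ S := by linarith
  have hSS : S ≤ S * S := by nlinarith
  set M : ℝ := (κd + κe + Ka) * (S * S) with hMdef
  have hM0 : 0 ≤ M := by
    apply mul_nonneg (by linarith) (mul_nonneg hS0 hS0)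
  set K : ℝ := 4 * M with hKdef
  have hK0 : 0 ≤ K := by simp only [hKdef]; linarith
  -- coefficient sub-bounds
  have hκdM : κd * (S * S) ≤ M := by simp only [hMdef]; nlinarith [mul_nonneg hS0 hS0]
  have hκeM : κe * (S * S) ≤ M := by simp only [hMdef]; nlinarith [mul_nonneg hS0 hS0]
  have hKaM : Ka * (S * S) ≤ M := by simp only [hMdef]; nlinarith [mul_nonneg hS0 hS0]
  -- the vector function of infeasible components
  set f : ℝ → (Fin (N0+1) × Fin (C+1)) → ℝ :=
    fun s i => if (i.1 : ℕ) < (i.2 : ℕ) then P i.1 i.2 s else 0 with hfdef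
  set f' : ℝ → (Fin (N0+1) × Fin (C+1)) → ℝ :=
    fun s i => if (i.1 : ℕ) < (i.2 : ℕ) then cmeRHS N0 C κd κe κa P i.1 i.2 s else 0 with hf'def
  have hcomp : ∀ s : ℝ, ∀ n' o' : ℕ, n' ≤ N0 → o' ≤ C → n' < o' → |P n' o' s| ≤ ‖f s‖ := by
    intro s n' o' hn' ho' hlt
    have h1 : n' < N0 + 1 := Nat.lt_succ_of_le hn'
    have h2 : o' < C + 1 := Nat.lt_succ_of_le ho'
    have := norm_le_pi_norm (f s) (⟨n', h1⟩, ⟨o', h2⟩)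
    simpa [hfdef, hlt, Real.norm_eq_abs] using this
  have hfderiv : ∀ x ∈ Set.Ico (0:ℝ) t, HasDerivWithinAt f (f' x) (Set.Ici x) x := by
    intro x hx
    rw [hasDerivWithinAt_pi]
    intro i
    by_cases h : (i.1 : ℕ) < (i.2 : ℕ)
    · have hd := hP i.1 (Nat.lt_succ_iff.1 i.1.isLt) i.2 (Nat.lt_succ_iff.1 i.2.isLt) x hx.1
      simpa [hfdef, hf'def, h] using hd.hasDerivWithinAt
    · simpa [hfdef, hf'def, h] using (hasDerivWithinAt_const x (Set.Ici x) (0:ℝ))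
  have hfc : ContinuousOn f (Set.Icc 0 t) := by
    rw [continuousOn_pi]
    intro i
    by_cases h : (i.1 : ℕ) < (i.2 : ℕ)
    · have he : (fun y => f y i) = fun y => P i.1 i.2 y := by funext y; simp [hfdef, h]
      rw [he]
      intro x hx
      exact (hP i.1 (Nat.lt_succ_iff.1 i.1.isLt) i.2 (Nat.lt_succ_iff.1 i.2.isLt) x
        hx.1).continuousAt.continuousWithinAt
    · have he : (fun y => f y i) = fun _ => (0:ℝ) := by funext y; simp [hfdef, h]
      rw [he]; exact continuousOn_const
  have hf0 : ‖f 0‖ ≤ 0 := by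
    have hz : f 0 = 0 := by
      funext i
      by_cases h : (i.1 : ℕ) < (i.2 : ℕ)
      · have ho0 : (i.2 : ℕ) ≠ 0 := by omega
        have := hinit0 (i.1 : ℕ) (i.2 : ℕ) (fun hc => ho0 hc.2)
        simp [hfdef, h, this]
      · simp [hfdef, h]
    simp [hz]
  have hbound : ∀ x ∈ Set.Ico (0:ℝ) t, ‖f' x‖ ≤ K * ‖f x‖ + 0 := by
    intro x hx
    rw [add_zero]
    have hF0 : (0:ℝ) ≤ ‖f x‖ := norm_nonneg _
    have hMF0 : 0 ≤ M * ‖f x‖ := mul_nonneg hM0 hF0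
    have hKF : 0 ≤ K * ‖f x‖ := mul_nonneg hK0 hF0
    have haK : κa x ≤ Ka := hx0 x ⟨hx.1, le_of_lt hx.2⟩
    have ha0 : 0 ≤ κa x := hκa x
    rw [pi_norm_le_iff_of_nonneg hKF]
    rintro ⟨⟨nn, hnlt⟩, ⟨oo, holt⟩⟩
    by_cases h : nn < oo
    swap
    · simpa [hf'def, h] using hKF
    have hn' : nn ≤ N0 := Nat.lt_succ_iff.1 hnlt
    have ho' : oo ≤ C := Nat.lt_succ_iff.1 holt
    have hnr : (nn:ℝ) ≤ (N0:ℝ) := Nat.cast_le.2 hn'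
    have hor : (oo:ℝ) ≤ (C:ℝ) := Nat.cast_le.2 ho'
    have hnr0 : (0:ℝ) ≤ (nn:ℝ) := Nat.cast_nonneg _
    have hor0 : (0:ℝ) ≤ (oo:ℝ) := Nat.cast_nonneg _
    have hnro : (nn:ℝ) < (oo:ℝ) := Nat.cast_lt.2 h
    show ‖f' x (⟨nn, hnlt⟩, ⟨oo, holt⟩)‖ ≤ K * ‖f x‖
    have hfx : f' x (⟨nn, hnlt⟩, ⟨oo, holt⟩) = cmeRHS N0 C κd κe κa P nn oo x := by
      simp [hf'def, h]
    rw [hfx, Real.norm_eq_abs, cmeRHS]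
    -- bound each of the four terms by M * ‖f x‖
    have hT1 : |-(κd * (oo : ℝ) + κe * ((nn : ℝ) - (oo : ℝ)) +
        κa x * ((nn : ℝ) - (oo : ℝ)) * ((C : ℝ) - (oo : ℝ))) * P nn oo x| ≤ M * ‖f x‖ := by
      rw [abs_mul, abs_neg]
      have h1 : |(nn:ℝ) - (oo:ℝ)| ≤ S := abs_le.2 ⟨by simp only [hSdef]; linarith,
        by simp only [hSdef]; linarith⟩
      have h2 : |(C:ℝ) - (oo:ℝ)| ≤ S := abs_le.2 ⟨by simp only [hSdef]; linarith,
        by simp only [hSdef]; linarith⟩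
      have e1 : |κd * (oo:ℝ)| ≤ κd * (S * S) := by
        rw [abs_mul, abs_of_nonneg hκd, abs_of_nonneg hor0]
        have : (oo:ℝ) ≤ S * S := le_trans (by simp only [hSdef]; linarith) hSS
        exact mul_le_mul_of_nonneg_left this hκd
      have e2 : |κe * ((nn:ℝ) - (oo:ℝ))| ≤ κe * (S * S) := by
        rw [abs_mul, abs_of_nonneg hκe]
        exact mul_le_mul_of_nonneg_left (h1.trans hSS) hκe
      have e3 : |κa x * ((nn:ℝ) - (oo:ℝ)) * ((C:ℝ) - (oo:ℝ))| ≤ Ka * (S * S) := by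
        rw [abs_mul, abs_mul, abs_of_nonneg ha0, mul_assoc]
        apply mul_le_mul haK _ (mul_nonneg (abs_nonneg _) (abs_nonneg _)) hKa0
        exact mul_le_mul h1 h2 (abs_nonneg _) hS0
      have hc : |κd * (oo : ℝ) + κe * ((nn : ℝ) - (oo : ℝ)) +
          κa x * ((nn : ℝ) - (oo : ℝ)) * ((C : ℝ) - (oo : ℝ))| ≤ M := by
        have t1 := abs_add_le (κd * (oo : ℝ) + κe * ((nn : ℝ) - (oo : ℝ)))
          (κa x * ((nn : ℝ) - (oo : ℝ)) * ((C : ℝ) - (oo : ℝ)))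
        have t2 := abs_add_le (κd * (oo : ℝ)) (κe * ((nn : ℝ) - (oo : ℝ)))
        have hMeq : M = κd * (S * S) + κe * (S * S) + Ka * (S * S) := by
          simp only [hMdef]; ring
        linarith
      exact mul_le_mul hc (hcomp x nn oo hn' ho' h) (abs_nonneg _) hM0
    have hT2 : |(if oo + 1 ≤ C then κd * ((oo : ℝ) + 1) * P nn (oo + 1) x else 0)|
        ≤ M * ‖f x‖ := by
      by_cases hcnd : oo + 1 ≤ C
      · rw [if_pos hcnd, abs_mul]
        have hcoef : |κd * ((oo:ℝ) + 1)| ≤ M := by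
          rw [abs_mul, abs_of_nonneg hκd, abs_of_nonneg (by linarith : (0:ℝ) ≤ (oo:ℝ) + 1)]
          have : (oo:ℝ) + 1 ≤ S * S := le_trans (by simp only [hSdef]; linarith) hSS
          exact le_trans (mul_le_mul_of_nonneg_left this hκd) hκdM
        exact mul_le_mul hcoef (hcomp x nn (oo + 1) hn' hcnd (by omega)) (abs_nonneg _) hM0
      · rw [if_neg hcnd]; simpa using hMF0
    have hT3 : |(if nn + 1 ≤ N0 then κe * ((nn : ℝ) + 1 - (oo : ℝ)) * P (nn + 1) oo x else 0)|
        ≤ M * ‖f x‖ := by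
      by_cases hcnd : nn + 1 ≤ N0
      · rw [if_pos hcnd]
        rcases eq_or_lt_of_le (Nat.succ_le_of_lt h) with heq | hlt
        · have h0 : (nn:ℝ) + 1 - (oo:ℝ) = 0 := by
            have h1 : ((nn:ℝ) + 1) = (oo : ℝ) := by exact_mod_cast heq
            linarith
          rw [h0]; simpa using hMF0
        · rw [abs_mul]
          have hcoef : |κe * ((nn:ℝ) + 1 - (oo:ℝ))| ≤ M := by
            rw [abs_mul, abs_of_nonneg hκe]
            have h1 : |(nn:ℝ) + 1 - (oo:ℝ)| ≤ S := abs_le.2 ⟨by simp only [hSdef]; linarith,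
              by simp only [hSdef]; linarith⟩
            exact le_trans (mul_le_mul_of_nonneg_left (h1.trans hSS) hκe) hκeM
          exact mul_le_mul hcoef (hcomp x (nn + 1) oo hcnd ho' hlt) (abs_nonneg _) hM0
      · rw [if_neg hcnd]; simpa using hMF0
    have hT4 : |(if 1 ≤ oo then κa x * ((nn : ℝ) - (oo : ℝ) + 1) * ((C : ℝ) - (oo : ℝ) + 1)
        * P nn (oo - 1) x else 0)| ≤ M * ‖f x‖ := by
      by_cases hcnd : 1 ≤ oo
      · rw [if_pos hcnd]
        rcases eq_or_lt_of_le (Nat.succ_le_of_lt h) with heq | hlt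
        · have h0 : (nn:ℝ) - (oo:ℝ) + 1 = 0 := by
            have h1 : ((nn:ℝ) + 1) = (oo : ℝ) := by exact_mod_cast heq
            linarith
          rw [h0]; simpa using hMF0
        · rw [abs_mul]
          have hcoef : |κa x * ((nn:ℝ) - (oo:ℝ) + 1) * ((C:ℝ) - (oo:ℝ) + 1)| ≤ M := by
            rw [abs_mul, abs_mul, abs_of_nonneg ha0, mul_assoc]
            have h1 : |(nn:ℝ) - (oo:ℝ) + 1| ≤ S := abs_le.2 ⟨by simp only [hSdef]; linarith,
              by simp only [hSdef]; linarith⟩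
            have h2 : |(C:ℝ) - (oo:ℝ) + 1| ≤ S := abs_le.2 ⟨by simp only [hSdef]; linarith,
              by simp only [hSdef]; linarith⟩
            have : κa x * (|(nn:ℝ) - (oo:ℝ) + 1| * |(C:ℝ) - (oo:ℝ) + 1|) ≤ Ka * (S * S) :=
              mul_le_mul haK (mul_le_mul h1 h2 (abs_nonneg _) hS0)
                (mul_nonneg (abs_nonneg _) (abs_nonneg _)) hKa0
            exact this.trans hKaM
          have hPle : |P nn (oo - 1) x| ≤ ‖f x‖ :=
            hcomp x nn (oo - 1) hn' (by omega) (by omega)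
          exact mul_le_mul hcoef hPle (abs_nonneg _) hM0
      · rw [if_neg hcnd]; simpa using hMF0
    set T1 := -(κd * (oo : ℝ) + κe * ((nn : ℝ) - (oo : ℝ)) +
        κa x * ((nn : ℝ) - (oo : ℝ)) * ((C : ℝ) - (oo : ℝ))) * P nn oo x
    set T2 := (if oo + 1 ≤ C then κd * ((oo : ℝ) + 1) * P nn (oo + 1) x else 0)
    set T3 := (if nn + 1 ≤ N0 then κe * ((nn : ℝ) + 1 - (oo : ℝ)) * P (nn + 1) oo x else 0)
    set T4 := (if 1 ≤ oo then κa x * ((nn : ℝ) - (oo : ℝ) + 1) * ((C : ℝ) - (oo : ℝ) + 1)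
        * P nn (oo - 1) x else 0)
    have habs : |T1 + T2 + T3 + T4| ≤ |T1| + |T2| + |T3| + |T4| := by
      calc |T1 + T2 + T3 + T4| ≤ |T1 + T2 + T3| + |T4| := abs_add_le _ _
        _ ≤ (|T1 + T2| + |T3|) + |T4| := by linarith [abs_add_le (T1 + T2) T3]
        _ ≤ ((|T1| + |T2|) + |T3|) + |T4| := by linarith [abs_add_le T1 T2]
    have hKeq : K * ‖f x‖ = M * ‖f x‖ + M * ‖f x‖ + M * ‖f x‖ + M * ‖f x‖ := by
      simp only [hKdef]; ring
    linarith
  have hgron := norm_le_gronwallBound_of_norm_deriv_right_le hfc hfderiv hf0 hbound t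
    (Set.right_mem_Icc.2 ht)
  have hft : ‖f t‖ ≤ 0 := by simpa [gronwallBound_ε0_δ0] using hgron
  have hft0 : f t = 0 := norm_le_zero_iff.1 hft
  have := congrFun hft0 (⟨n, Nat.lt_succ_of_le hn⟩, ⟨o, Nat.lt_succ_of_le ho⟩)
  simpa [hfdef, hno] using this
end
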